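/- arXiv:1506.08311 — 4 statements merged into one kernel-verified Lean document; each statement's English description precedes it below -/
import Mathlib

section
/- Let t ≥ 2 be an integer, let m ≥ 4 be even, let M be a perfect matching of K_m, and let w_1, w_2, w_3, w_4 be four distinct vertices of K_m with {w_1, w_2} ∈ M and {w_3, w_4} ∈ M. Then the t-subdivided prism G of K_m has a Hamiltonian cycle T such that: (i) for every {a,b} ∈ M the bottom edge (u_a^1, u_b^1) belongs to E(T); (ii) every vertical edge of G belongs to E(T); and (iii) the top edge (u_{w_1}^t, u_{w_3}^t) belongs to E(T). -/
/-!
List the matching edges as `{w₂, w₁}, {w₃, w₄}, {a₃, b₃}, …, {a_k, b_k}`. The tour runs down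
column `w₂`, along the bottom edge to `w₁`, up column `w₁`, along the top edge to `w₃`, down
column `w₃`, along the bottom edge to `w₄`, up column `w₄`, along the top edge to `a₃`, and so on;
it closes with the top edge from `b_k` back to `w₂`. Every vertical edge and every bottom matching
edge is traversed, and so is the top edge `w₁w₃`.
-/

open SimpleGraph Finset

attribute [local instance] Classical.propDecidable

/-- An edge `e` crosses the vertex set `S` if it has an endpoint in `S`
and an endpoint outside `S`. -/
def crossing {V : Type*} (S : Finset V) (e : Sym2 V) : Prop :=
  (∃ a ∈ e, a ∈ S) ∧ (∃ a ∈ e, a ∉ S)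

/-- A comb with handle `H` and teeth `T 0, …, T (k-1)`. -/
def IsComb {V : Type*} [Fintype V] [DecidableEq V]
    (H : Finset V) {k : ℕ} (T : Fin k → Finset V) : Prop :=
  3 ≤ k ∧ Odd k ∧
  (∀ i j, i ≠ j → Disjoint (T i) (T j)) ∧
  (∀ i, (H ∩ T i).Nonempty) ∧
  (H \ Finset.univ.biUnion T).Nonempty

/-- An `(h,t)`-uniform comb: every tooth has size `t` and meets the handle
in exactly `h` vertices. -/
def IsUniformComb {V : Type*} [Fintype V] [DecidableEq V] (h t : ℕ)
    (H : Finset V) {k : ℕ} (T : Fin k → Finset V) : Prop :=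
  IsComb H T ∧ ∀ i, (T i).card = t ∧ (H ∩ T i).card = h

/-- The `t`-subdivided prism over `K_m`: vertex `(i, j)` is the copy of
vertex `i` in layer `j` (layer `0` is the bottom, layer `t-1` the top).
There are complete graphs on the bottom and top layers, and vertical paths
joining consecutive layers in each column. -/
def subPrism (m t : ℕ) : SimpleGraph (Fin m × Fin t) :=
  SimpleGraph.fromRel (fun p q =>
    (p.2.val = 0 ∧ q.2.val = 0 ∧ p.1 ≠ q.1) ∨
    (p.2.val = t - 1 ∧ q.2.val = t - 1 ∧ p.1 ≠ q.1) ∨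
    (p.1 = q.1 ∧ p.2.val + 1 = q.2.val))

/-- A perfect matching of `K_m`, given as a set of (non-loop) edges such that
every vertex belongs to exactly one of them. -/
def IsPerfectMatchingKm (m : ℕ) (M : Finset (Sym2 (Fin m))) : Prop :=
  (∀ e ∈ M, ¬ e.IsDiag) ∧ ∀ v : Fin m, ∃! e, e ∈ M ∧ v ∈ e

namespace SimpleGraph.Walk

variable {V : Type*} {G : SimpleGraph V}

theorem isChain_support_mem_edges {u v : V} (p : G.Walk u v) :
    p.support.IsChain fun a b => s(a, b) ∈ p.edges :=
  List.isChain_iff_forall_rel_of_append_cons_cons.mpr fun a b l₁ l₂ h =>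
    infix_support_iff_mem_edges.mp (.inl ⟨l₁, l₂, by simp [h]⟩)

theorem exists_isHamiltonianCycle_of_isChain [DecidableEq V] [Fintype V]
    (hV : 3 ≤ Fintype.card V) {L : List V} {u v : V} (hu : L.head? = some u)
    (hv : L.getLast? = some v) (hL : L.IsChain G.Adj) (hnd : L.Nodup) (hcov : ∀ x, x ∈ L)
    (hvu : G.Adj v u) :
    ∃ C : G.Walk v v, C.IsHamiltonianCycle ∧ L.IsChain fun a b => s(a, b) ∈ C.edges := by
  have hne : L ≠ [] := by rintro rfl; simp at hu
  obtain rfl : L.head hne = u := by simpa [List.head?_eq_some_head hne] using hu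
  obtain rfl : L.getLast hne = v := by simpa [List.getLast?_eq_some_getLast hne] using hv
  let P := ofSupport L hne hL
  have hP : P.IsPath := IsPath.mk' (by simpa [P])
  have hlen : 3 ≤ L.length := hV.trans <| by
    simpa [Finset.eq_univ_of_forall fun x => List.mem_toFinset.mpr (hcov x)] using
      L.toFinset_card_le
  refine ⟨cons hvu P, ?_, ?_⟩
  · rw [isHamiltonianCycle_iff_isCycle_and_support_count_tail_eq_one]
    refine ⟨Path.cons_isCycle ⟨P, hP⟩ hvu fun h => ?_, fun x => ?_⟩
    · have := hP.length_eq_one_of_mem_edges (Sym2.eq_swap ▸ h)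
      simp only [P, length_ofSupport] at this
      omega
    · simpa [P] using List.count_eq_one_of_mem hnd (hcov x)
  · have := (cons hvu P).isChain_support_mem_edges
    simp only [support_cons, P, support_ofSupport] at this
    exact this.tail

end SimpleGraph.Walk

theorem Finset.exists_append_map_mk_perm_toList {α : Type*} {M : Finset (Sym2 α)}
    {l : List (α × α)} (hl : (l.map fun p => s(p.1, p.2)).Nodup)
    (hlM : ∀ p ∈ l, s(p.1, p.2) ∈ M) :
    ∃ r : List (α × α), ((l ++ r).map fun p => s(p.1, p.2)).Perm M.toList := by
  have hsub : (l.map fun p => s(p.1, p.2)).Subperm M.toList :=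
    List.subperm_of_subset hl fun e he => by
      obtain ⟨p, hp, rfl⟩ := List.mem_map.mp he
      exact Finset.mem_toList.mpr (hlM p hp)
  obtain ⟨l', hl', hl'M⟩ := hsub
  obtain ⟨r', hr'⟩ := hl'M.exists_perm_append
  obtain ⟨r, rfl⟩ :=
    (List.map_surjective_iff (f := fun p : α × α => s(p.1, p.2))).mpr Sym2.mk_surjective r'
  exact ⟨r, by simpa using (hr'.trans (hl'.append_right _)).symm⟩

def flattenPairs {α : Type*} (P : List (α × α)) : List α :=
  P.flatMap fun p => [p.1, p.2]

theorem snd_ne_fst_of_nodup_flattenPairs {α : Type*} {p q : α × α} {P : List (α × α)}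
    (h : (flattenPairs (p :: P)).Nodup) (hq : q ∈ p :: P) : q.2 ≠ p.1 := by
  simp only [flattenPairs, List.flatMap_cons, List.cons_append, List.nil_append,
    List.nodup_cons, List.mem_cons, not_or] at h
  rcases List.mem_cons.mp hq with rfl | hq
  · exact Ne.symm h.1.1
  · intro hq₂
    exact h.1.2 (List.mem_flatMap.mpr ⟨q, hq, by simp [← hq₂]⟩)

namespace IsPerfectMatchingKm

variable {m : ℕ} {M : Finset (Sym2 (Fin m))} {P : List (Fin m × Fin m)}

theorem nodup_flattenPairs (hM : IsPerfectMatchingKm m M)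
    (hP : (P.map fun p => s(p.1, p.2)).Perm M.toList) : (flattenPairs P).Nodup := by
  have hnd : (P.map fun p => s(p.1, p.2)).Nodup := hP.nodup_iff.mpr M.nodup_toList
  have hPM (p) (hp : p ∈ P) : s(p.1, p.2) ∈ M :=
    Finset.mem_toList.mp (hP.subset (List.mem_map_of_mem hp))
  rw [flattenPairs, List.nodup_flatMap]
  refine ⟨fun p hp => ?_, (List.pairwise_map.mp hnd).imp_of_mem fun hp hq hne v hvp hvq => ?_⟩
  · simpa [Sym2.mk_isDiag_iff] using hM.1 _ (hPM p hp)
  · exact hne <| (hM.2 v).unique ⟨hPM _ hp, by simpa [Sym2.mem_iff] using hvp⟩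
      ⟨hPM _ hq, by simpa [Sym2.mem_iff] using hvq⟩

theorem mem_flattenPairs (hM : IsPerfectMatchingKm m M)
    (hP : (P.map fun p => s(p.1, p.2)).Perm M.toList) (v : Fin m) : v ∈ flattenPairs P := by
  obtain ⟨e, ⟨he, hv⟩, -⟩ := hM.2 v
  obtain ⟨p, hp, rfl⟩ := List.mem_map.mp (hP.mem_iff.mpr (Finset.mem_toList.mpr he))
  exact List.mem_flatMap.mpr ⟨p, hp, by simpa [Sym2.mem_iff] using hv⟩

end IsPerfectMatchingKm

namespace SubPrism

variable {m t : ℕ}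

theorem adj_vertical (c : Fin m) {j : ℕ} (hj : j + 1 < t) :
    (subPrism m t).Adj (c, ⟨j, by omega⟩) (c, ⟨j + 1, hj⟩) := by
  simp [subPrism, fromRel_adj, Prod.ext_iff]

theorem adj_bottom (ht : 0 < t) {a b : Fin m} (h : a ≠ b) :
    (subPrism m t).Adj (a, ⟨0, ht⟩) (b, ⟨0, ht⟩) := by
  simp [subPrism, fromRel_adj, h]

theorem adj_top (ht : 0 < t) {a b : Fin m} (h : a ≠ b) :
    (subPrism m t).Adj (a, ⟨t - 1, by omega⟩) (b, ⟨t - 1, by omega⟩) := by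
  simp [subPrism, fromRel_adj, h]

variable (t) in
def column (c : Fin m) : List (Fin m × Fin t) :=
  (List.finRange t).map (c, ·)

variable (t) in
def zigzag (P : List (Fin m × Fin m)) : List (Fin m × Fin t) :=
  P.flatMap fun p => (column t p.1).reverse ++ column t p.2

@[simp] theorem mem_column {c : Fin m} {q : Fin m × Fin t} : q ∈ column t c ↔ q.1 = c := by
  simp [column, Prod.ext_iff, eq_comm]

theorem nodup_column (c : Fin m) : (column t c).Nodup :=
  (List.nodup_finRange t).map (Prod.mk_right_injective c)

theorem head?_column (ht : 0 < t) (c : Fin m) : (column t c).head? = some (c, ⟨0, ht⟩) := by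
  obtain ⟨t, rfl⟩ := Nat.exists_eq_add_of_lt ht
  simp [column, List.finRange_succ]

theorem getLast?_column (ht : 0 < t) (c : Fin m) :
    (column t c).getLast? = some (c, ⟨t - 1, by omega⟩) := by
  rw [List.getLast?_eq_getElem?]
  simp [column, ht]

theorem isChain_column {R : Fin m × Fin t → Fin m × Fin t → Prop} {c : Fin m} :
    (column t c).IsChain R ↔ ∀ j (hj : j + 1 < t), R (c, ⟨j, by omega⟩) (c, ⟨j + 1, hj⟩) := by
  simp [column, List.isChain_iff_getElem]

theorem zigzag_cons (p : Fin m × Fin m) (P : List (Fin m × Fin m)) :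
    zigzag t (p :: P) = ((column t p.1).reverse ++ column t p.2) ++ zigzag t P :=
  rfl

@[simp] theorem mem_zigzag {P : List (Fin m × Fin m)} {q : Fin m × Fin t} :
    q ∈ zigzag t P ↔ q.1 ∈ flattenPairs P := by
  simp [zigzag, flattenPairs]

theorem head?_zigzag (ht : 0 < t) (P : List (Fin m × Fin m)) :
    (zigzag t P).head? = P.head?.map fun p => (p.1, ⟨t - 1, by omega⟩) := by
  cases P <;> simp [zigzag, List.head?_append, getLast?_column ht]

theorem getLast?_zigzag (ht : 0 < t) (P : List (Fin m × Fin m)) :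
    (zigzag t P).getLast? = P.getLast?.map fun p => (p.2, ⟨t - 1, by omega⟩) := by
  induction P with
  | nil => simp [zigzag]
  | cons p P ih =>
    simp only [zigzag] at ih ⊢
    cases P <;> simp_all [List.getLast?_append, getLast?_column ht]

theorem isChain_zigzag_iff (ht : 0 < t) {R : Fin m × Fin t → Fin m × Fin t → Prop}
    (hR : Std.Symm R) {P : List (Fin m × Fin m)} :
    (zigzag t P).IsChain R ↔
      (∀ p ∈ P, (column t p.1).IsChain R ∧ (column t p.2).IsChain R ∧
        R (p.1, ⟨0, ht⟩) (p.2, ⟨0, ht⟩)) ∧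
      P.IsChain fun p q => R (p.2, ⟨t - 1, by omega⟩) (q.1, ⟨t - 1, by omega⟩) := by
  have hrev (l : List (Fin m × Fin t)) : l.reverse.IsChain R ↔ l.IsChain R := by
    rw [List.isChain_reverse]; exact Iff.of_eq (congrArg (List.IsChain · l) Std.Symm.flip_eq)
  induction P with
  | nil => simp [zigzag]
  | cons p P ih =>
    have hbottom : (∀ x ∈ (column t p.1).reverse.getLast?, ∀ y ∈ (column t p.2).head?, R x y) ↔
        R (p.1, ⟨0, ht⟩) (p.2, ⟨0, ht⟩) := by
      simp [head?_column ht]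
    have htop : (∀ x ∈ ((column t p.1).reverse ++ column t p.2).getLast?,
        ∀ y ∈ (zigzag t P).head?, R x y) ↔
        ∀ q ∈ P.head?, R (p.2, ⟨t - 1, by omega⟩) (q.1, ⟨t - 1, by omega⟩) := by
      cases P <;> simp [List.getLast?_append, getLast?_column ht, head?_zigzag ht]
    simp only [zigzag_cons, List.isChain_append, hrev, hbottom, htop, ih, List.forall_mem_cons,
      List.isChain_cons]
    tauto

theorem nodup_zigzag {P : List (Fin m × Fin m)} (hP : (flattenPairs P).Nodup) :
    (zigzag t P).Nodup := by
  induction P with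
  | nil => simp [zigzag]
  | cons p P ih =>
    simp only [flattenPairs, List.flatMap_cons, List.cons_append, List.nil_append,
      List.nodup_cons, List.mem_cons, not_or] at hP
    obtain ⟨⟨hp, hp₁⟩, hp₂, hP⟩ := hP
    rw [zigzag_cons]
    refine ((List.nodup_reverse.mpr (nodup_column _)).append (nodup_column _) ?_).append
      (ih hP) ?_
    · intro q hq hq'
      rw [List.mem_reverse, mem_column] at hq
      exact hp (hq ▸ mem_column.mp hq')
    · intro q hq hq'
      rw [mem_zigzag] at hq'
      rcases List.mem_append.mp hq with hq | hq <;>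
        simp only [List.mem_reverse, mem_column] at hq
      · exact hp₁ (hq ▸ hq')
      · exact hp₂ (hq ▸ hq')

theorem isChain_adj_zigzag (ht : 0 < t) {P : List (Fin m × Fin m)}
    (hP : (flattenPairs P).Nodup) : (zigzag t P).IsChain (subPrism m t).Adj := by
  rw [flattenPairs, List.nodup_flatMap] at hP
  obtain ⟨hpairs, hdisj⟩ := hP
  refine (isChain_zigzag_iff ht (subPrism m t).symm).mpr
    ⟨fun p hp => ?_, hdisj.isChain.imp fun p q h => ?_⟩
  · have hvert (c : Fin m) : (column t c).IsChain (subPrism m t).Adj :=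
      isChain_column.mpr fun _ => adj_vertical c
    exact ⟨hvert _, hvert _, adj_bottom ht (by simpa using hpairs p hp)⟩
  · exact adj_top ht fun e => by simp [e] at h

theorem exists_isHamiltonianCycle_isChain_zigzag (ht : 0 < t) (hmt : 3 ≤ m * t)
    {p : Fin m × Fin m} {P : List (Fin m × Fin m)} (hnd : (flattenPairs (p :: P)).Nodup)
    (hcov : ∀ c, c ∈ flattenPairs (p :: P)) :
    ∃ (v : Fin m × Fin t) (C : (subPrism m t).Walk v v), C.IsHamiltonianCycle ∧
      (zigzag t (p :: P)).IsChain fun a b => s(a, b) ∈ C.edges :=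
  ⟨_, Walk.exists_isHamiltonianCycle_of_isChain (by simpa using hmt)
    (by simp [head?_zigzag ht]) (by simp [getLast?_zigzag ht, List.getLast?_eq_some_getLast])
    (isChain_adj_zigzag ht hnd) (nodup_zigzag hnd) (fun v => mem_zigzag.mpr (hcov v.1))
    (adj_top ht (snd_ne_fst_of_nodup_flattenPairs hnd (List.getLast_mem (List.cons_ne_nil _ _))))⟩

end SubPrism

open SubPrism

theorem tour_from_matching (t m : ℕ) (ht : 2 ≤ t) (hm : 4 ≤ m)
    (M : Finset (Sym2 (Fin m))) (hM : IsPerfectMatchingKm m M)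
    (w₁ w₂ w₃ w₄ : Fin m)
    (hdist : w₁ ≠ w₂ ∧ w₁ ≠ w₃ ∧ w₁ ≠ w₄ ∧ w₂ ≠ w₃ ∧ w₂ ≠ w₄ ∧ w₃ ≠ w₄)
    (h12 : s(w₁, w₂) ∈ M) (h34 : s(w₃, w₄) ∈ M) :
    ∃ (v : Fin m × Fin t) (C : (subPrism m t).Walk v v),
      C.IsHamiltonianCycle ∧
      (∀ a b : Fin m, s(a, b) ∈ M →
        s(((a, ⟨0, by omega⟩) : Fin m × Fin t), (b, ⟨0, by omega⟩)) ∈ C.edges) ∧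
      (∀ (i : Fin m) (j : ℕ) (hj : j + 1 < t),
        s(((i, ⟨j, by omega⟩) : Fin m × Fin t), (i, ⟨j + 1, hj⟩)) ∈ C.edges) ∧
      s(((w₁, ⟨t - 1, by omega⟩) : Fin m × Fin t), (w₃, ⟨t - 1, by omega⟩)) ∈ C.edges := by
  have ht₀ : 0 < t := by omega
  obtain ⟨-, -, -, hd23, hd24, -⟩ := hdist
  obtain ⟨r, hr⟩ : ∃ r, (((w₂, w₁) :: (w₃, w₄) :: r).map fun p => s(p.1, p.2)).Perm M.toList :=
    Finset.exists_append_map_mk_perm_toList (l := [(w₂, w₁), (w₃, w₄)])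
      (by simp [hd23, hd24]) (by simp [Sym2.eq_swap, h12, h34])
  obtain ⟨v, C, hC, hCP⟩ := exists_isHamiltonianCycle_isChain_zigzag ht₀ (by nlinarith)
    (hM.nodup_flattenPairs hr) (hM.mem_flattenPairs hr)
  obtain ⟨hpairs, htop⟩ :=
    (isChain_zigzag_iff ht₀ ⟨fun a b h => by rwa [Sym2.eq_swap]⟩).mp hCP
  refine ⟨v, C, hC, fun a b hab => ?_, fun i j hj => ?_, (List.isChain_cons_cons.mp htop).1⟩
  · obtain ⟨p, hp, hpab⟩ := List.mem_map.mp (hr.mem_iff.mpr (Finset.mem_toList.mpr hab))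
    have hbottom := (hpairs p hp).2.2
    rwa [← Sym2.map_mk (fun c : Fin m => ((c, ⟨0, ht₀⟩) : Fin m × Fin t)), hpab,
      Sym2.map_mk] at hbottom
  · obtain ⟨p, hp, hi⟩ := List.mem_flatMap.mp (hM.mem_flattenPairs hr i)
    rcases List.mem_pair.mp hi with rfl | rfl
    · exact isChain_column.mp (hpairs p hp).1 j hj
    · exact isChain_column.mp (hpairs p hp).2.1 j hj
end

section
/- Let t ≥ 2 and h be integers with 1 ≤ h < t, let m ≥ 6 be even, let M be a perfect matching of K_m, and let S be a set of vertices of K_m with |S| = s ≥ 5 containing four distinct vertices w_1, w_2, w_3, w_4 with {w_1, w_2} ∈ M and {w_3, w_4} ∈ M. In the t-subdivided prism G of K_m, define the handle H = {u_w^1 : w ∈ S} ∪ {u_{w_1}^j, u_{w_3}^j : 2 ≤ j ≤ t} ∪ {u_w^j : w ∈ S \ {w_1, w_3}, 2 ≤ j ≤ h} and, for each w ∈ S \ {w_1, w_3}, the tooth T_w = {u_w^j : 1 ≤ j ≤ t}. Then for every Hamiltonian cycle T of G that contains all bottom copies of the edges of M, all vertical edges of G, and the top edge (u_{w_1}^t,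 u_{w_3}^t), one has |δ(H) ∩ E(T)| = |δ(S) ∩ M| + (s − 2), and |δ(T_w) ∩ E(T)| = 2 for every w ∈ S \ {w_1, w_3}. -/
open SimpleGraph Finset

attribute [local instance] Classical.propDecidable

/-!
Every vertex lies on exactly two edges of the Hamiltonian cycle `C`. At a bottom vertex these are
its vertical edge and the copy of its matching edge, so the bottom edges of `C` are exactly the
copies of `M`; at the top vertices of the columns `w₁`, `w₃` they are the vertical edge and the top
edge `w₁w₃`, so no top edge of `C` leaves the handle. Hence `C` leaves the handle only through the
copies of the matching edges leaving `S` and, for each `w ∈ S \ {w₁, w₃}`, through the vertical edge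
where the column of `w` exits the handle. A column is left only through the non-vertical `C`-edge
at each of its two end vertices.
-/

lemma crossing_mk_iff {V : Type*} {P : Finset V} {x y : V} :
    crossing P s(x, y) ↔ (x ∈ P ↔ y ∉ P) := by
  simp only [crossing, Sym2.mem_iff, exists_eq_or_imp, exists_eq_left]
  tauto

lemma crossing_map_iff {V W : Type*} {P : Finset W} {Q : Finset V} {f : V → W}
    (hf : ∀ a, f a ∈ P ↔ a ∈ Q) (e : Sym2 V) : crossing P (e.map f) ↔ crossing Q e := by
  induction e using Sym2.ind with
  | _ x y => simp only [Sym2.map_mk, crossing_mk_iff, hf]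

namespace SimpleGraph.Walk.IsCycle

variable {V : Type*} {G : SimpleGraph V} [DecidableEq V] {v x y z u : V} {p : G.Walk v v}

lemma card_filter_mem_edges_eq_two (hp : p.IsCycle) (hx : x ∈ p.support) :
    (p.edges.toFinset.filter (x ∈ ·)).card = 2 := by
  have hset : ((p.edges.toFinset.filter (x ∈ ·) : Finset (Sym2 V)) : Set (Sym2 V)) =
      (s(x, ·)) '' p.toSubgraph.neighborSet x := by
    ext e
    simp only [coe_filter, List.mem_toFinset, Set.mem_ofPred_eq, Set.mem_image,
      Subgraph.mem_neighborSet, adj_toSubgraph_iff_mem_edges, Sym2.mem_iff_exists]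
    constructor
    · rintro ⟨he, y, rfl⟩
      exact ⟨y, he, rfl⟩
    · rintro ⟨y, he, rfl⟩
      exact ⟨he, y, rfl⟩
  rw [← Set.ncard_coe_finset, hset, Set.ncard_image_of_injective _ fun _ _ => Sym2.congr_right.mp,
    hp.ncard_neighborSet_toSubgraph_eq_two hx]

lemma eq_of_mem_edges (hp : p.IsCycle) (hy : s(x, y) ∈ p.edges) (hz : s(x, z) ∈ p.edges)
    (hu : s(x, u) ∈ p.edges) (hzy : z ≠ y) (huy : u ≠ y) : u = z := by
  have hpair : ({s(x, y), s(x, z)} : Finset (Sym2 V)) = p.edges.toFinset.filter (x ∈ ·) :=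
    eq_of_subset_of_card_le (by simp [insert_subset_iff, hy, hz])
      (by rw [hp.card_filter_mem_edges_eq_two (p.fst_mem_support_of_mem_edges hy),
        card_pair (mt Sym2.congr_right.mp hzy.symm)])
  have : s(x, u) ∈ ({s(x, y), s(x, z)} : Finset (Sym2 V)) := by simp [hpair, hu]
  rw [mem_insert, mem_singleton, Sym2.congr_right, Sym2.congr_right] at this
  exact this.resolve_left huy

lemma card_erase_filter_mem_edges (hp : p.IsCycle) (hxy : s(x, y) ∈ p.edges) :
    ((p.edges.toFinset.filter (x ∈ ·)).erase s(x, y)).card = 1 := by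
  rw [card_erase_of_mem (by simpa using hxy),
    hp.card_filter_mem_edges_eq_two (p.fst_mem_support_of_mem_edges hxy)]

end SimpleGraph.Walk.IsCycle

lemma subPrism_edge_cases {m t : ℕ} {e : Sym2 (Fin m × Fin t)}
    (he : e ∈ (subPrism m t).edgeSet) :
    (∃ (a b : Fin m) (j : Fin t), a ≠ b ∧ (j.val = 0 ∨ j.val = t - 1) ∧ e = s((a, j), (b, j))) ∨
    (∃ (a : Fin m) (j k : Fin t), j.val + 1 = k.val ∧ e = s((a, j), (a, k))) := by
  induction e using Sym2.ind with
  | _ p q =>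
    obtain ⟨a, j⟩ := p
    obtain ⟨b, k⟩ := q
    simp only [mem_edgeSet, subPrism, fromRel_adj] at he
    obtain ⟨-, (⟨hj, hk, hab⟩ | ⟨hj, hk, hab⟩ | ⟨rfl, hjk⟩) | ⟨hk, hj, hab⟩ | ⟨hk, hj, hab⟩ |
      ⟨rfl, hjk⟩⟩ := he
    · obtain rfl : j = k := Fin.ext (hj.trans hk.symm)
      exact .inl ⟨a, b, j, hab, .inl hj, rfl⟩
    · obtain rfl : j = k := Fin.ext (hj.trans hk.symm)
      exact .inl ⟨a, b, j, hab, .inr hj, rfl⟩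
    · exact .inr ⟨a, j, k, hjk, rfl⟩
    · obtain rfl : j = k := Fin.ext (hj.trans hk.symm)
      exact .inl ⟨a, b, j, Ne.symm hab, .inl hj, rfl⟩
    · obtain rfl : j = k := Fin.ext (hj.trans hk.symm)
      exact .inl ⟨a, b, j, Ne.symm hab, .inr hj, rfl⟩
    · exact .inr ⟨b, k, j, hjk, Sym2.eq_swap⟩

section Column

variable {m t : ℕ} {v : Fin m × Fin t} {C : (subPrism m t).Walk v v}

lemma crossing_column_iff {w : Fin m} {e : Sym2 (Fin m × Fin t)} (ht : 2 ≤ t)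
    (he : e ∈ (subPrism m t).edgeSet) :
    crossing (univ.filter (·.1 = w)) e ↔
      ((w, ⟨0, by omega⟩) ∈ e ∧ e ≠ s((w, ⟨0, by omega⟩), (w, ⟨1, by omega⟩))) ∨
      ((w, ⟨t - 1, by omega⟩) ∈ e ∧ e ≠ s((w, ⟨t - 1, by omega⟩), (w, ⟨t - 2, by omega⟩))) := by
  rcases subPrism_edge_cases he with ⟨a, b, j, hab, hj, rfl⟩ | ⟨a, j, k, hjk, rfl⟩ <;>
  simp only [crossing_mk_iff, mem_filter, mem_univ, true_and, Sym2.mem_iff, Sym2.eq_iff,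
    Prod.ext_iff, Fin.ext_iff, ne_eq] at * <;> omega

lemma top_notMem_of_bottom_mem {w : Fin m} {e : Sym2 (Fin m × Fin t)} (ht : 2 ≤ t)
    (he : e ∈ (subPrism m t).edgeSet) (hne : e ≠ s((w, ⟨0, by omega⟩), (w, ⟨1, by omega⟩)))
    (h₀ : (w, ⟨0, by omega⟩) ∈ e) : ((w, ⟨t - 1, by omega⟩) : Fin m × Fin t) ∉ e := by
  rcases subPrism_edge_cases he with ⟨a, b, j, hab, hj, rfl⟩ | ⟨a, j, k, hjk, rfl⟩ <;>
  simp only [Sym2.mem_iff, Sym2.eq_iff, Prod.ext_iff, Fin.ext_iff, ne_eq] at * <;> omega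

lemma card_filter_crossing_column (hC : C.IsCycle) (ht : 2 ≤ t)
    (hV : ∀ (a : Fin m) (j k : Fin t), j.val + 1 = k.val → s((a, j), (a, k)) ∈ C.edges)
    (w : Fin m) : (C.edges.toFinset.filter (crossing (univ.filter (·.1 = w)))).card = 2 := by
  have hbot : s(((w, ⟨0, by omega⟩) : Fin m × Fin t), (w, ⟨1, by omega⟩)) ∈ C.edges :=
    hV w _ _ rfl
  have htop : s(((w, ⟨t - 1, by omega⟩) : Fin m × Fin t), (w, ⟨t - 2, by omega⟩)) ∈ C.edges := by
    rw [Sym2.eq_swap]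
    exact hV w _ _ (by simp only; omega)
  have hsplit : C.edges.toFinset.filter (crossing (univ.filter (·.1 = w))) =
      (C.edges.toFinset.filter ((w, ⟨0, by omega⟩) ∈ ·)).erase
        s((w, ⟨0, by omega⟩), (w, ⟨1, by omega⟩)) ∪
      (C.edges.toFinset.filter ((w, ⟨t - 1, by omega⟩) ∈ ·)).erase
        s((w, ⟨t - 1, by omega⟩), (w, ⟨t - 2, by omega⟩)) := by
    ext e
    simp only [mem_filter, mem_union, mem_erase, List.mem_toFinset]
    by_cases he : e ∈ C.edges
    · rw [crossing_column_iff ht (C.edges_subset_edgeSet he)]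
      tauto
    · simp [he]
  rw [hsplit, card_union_of_disjoint, hC.card_erase_filter_mem_edges hbot,
    hC.card_erase_filter_mem_edges htop]
  simp only [Finset.disjoint_left, mem_erase, mem_filter, List.mem_toFinset]
  rintro e ⟨hne, he, h₀⟩ ⟨-, -, h₁⟩
  exact top_notMem_of_bottom_mem ht (C.edges_subset_edgeSet he) hne h₀ h₁

end Column

section Handle

variable {m t h : ℕ} {S W : Finset (Fin m)} {H : Finset (Fin m × Fin t)}
  (hH : ∀ a j, (a, j) ∈ H ↔ a ∈ S ∧ (a ∈ W ∨ j.val < h))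
include hH

lemma crossing_handle_bottom_iff (hh : 1 ≤ h) {j : Fin t} (hj : j.val = 0) (e : Sym2 (Fin m)) :
    crossing H (e.map (·, j)) ↔ crossing S e :=
  crossing_map_iff (fun a => by simp [hH, hj, show 0 < h by omega]) e

lemma crossing_handle_top_iff (hW : W ⊆ S) (hht : h < t) {j : Fin t} (hj : j.val = t - 1)
    (a b : Fin m) : crossing H s((a, j), (b, j)) ↔ crossing W s(a, b) := by
  refine crossing_map_iff (f := (·, j)) (fun c => ?_) s(a, b)
  rw [hH]
  exact ⟨fun ⟨_, hc⟩ => hc.resolve_right (by omega), fun hc => ⟨hW hc, .inl hc⟩⟩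

lemma crossing_handle_vertical_iff {a : Fin m} {j k : Fin t} (hjk : j.val + 1 = k.val) :
    crossing H s((a, j), (a, k)) ↔ a ∈ S \ W ∧ k.val = h := by
  rw [crossing_mk_iff, hH, hH, mem_sdiff]
  by_cases haS : a ∈ S <;> by_cases haW : a ∈ W <;> simp [haS, haW]
  omega

end Handle

lemma mem_handle_iff {m t h : ℕ} {S : Finset (Fin m)} {w₁ w₃ : Fin m} (hh : 1 ≤ h)
    (hw₁ : w₁ ∈ S) (hw₃ : w₃ ∈ S) (a : Fin m) (j : Fin t) :
    (a, j) ∈ Finset.univ.filter (fun p : Fin m × Fin t =>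
      (p.1 ∈ S ∧ p.2.val = 0) ∨
      ((p.1 = w₁ ∨ p.1 = w₃) ∧ 1 ≤ p.2.val) ∨
      (p.1 ∈ S ∧ p.1 ≠ w₁ ∧ p.1 ≠ w₃ ∧ 1 ≤ p.2.val ∧ p.2.val < h)) ↔
      a ∈ S ∧ (a ∈ ({w₁, w₃} : Finset (Fin m)) ∨ j.val < h) := by
  simp only [mem_filter, mem_univ, true_and, mem_insert, mem_singleton]
  by_cases ha : a = w₁ ∨ a = w₃
  · have haS : a ∈ S := ha.elim (· ▸ hw₁) (· ▸ hw₃)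
    simp only [ha, haS, true_and, true_or, iff_true]
    omega
  · rw [not_or] at ha
    by_cases haS : a ∈ S <;> simp [ha, haS]
    omega

lemma IsPerfectMatchingKm.exists_mem {m : ℕ} {M : Finset (Sym2 (Fin m))}
    (hM : IsPerfectMatchingKm m M) (a : Fin m) : ∃ b, s(a, b) ∈ M := by
  obtain ⟨e, ⟨he, hae⟩, -⟩ := hM.2 a
  obtain ⟨b, rfl⟩ := Sym2.mem_iff_exists.mp hae
  exact ⟨b, he⟩

section Tour

variable {m t h : ℕ} {v : Fin m × Fin t} {C : (subPrism m t).Walk v v}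
  {M : Finset (Sym2 (Fin m))} {S W : Finset (Fin m)} {H : Finset (Fin m × Fin t)}
  (hC : C.IsCycle)
  (hV : ∀ (a : Fin m) (j k : Fin t), j.val + 1 = k.val → s((a, j), (a, k)) ∈ C.edges)
include hC

lemma eq_of_horizontal_mem_edges {a b c : Fin m} {i j : Fin t} (hij : i ≠ j)
    (hv : s((a, j), (a, i)) ∈ C.edges) (hc : s((a, j), (c, j)) ∈ C.edges)
    (hb : s((a, j), (b, j)) ∈ C.edges) : b = c :=
  have hne {d : Fin m} : (d, j) ≠ (a, i) := fun hd => hij (congrArg Prod.snd hd).symm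
  congrArg Prod.fst (hC.eq_of_mem_edges hv hc hb hne hne)

include hV

lemma mem_of_bottom_mem_edges (hM : IsPerfectMatchingKm m M) (ht : 2 ≤ t)
    (hMC : ∀ a b : Fin m, s(a, b) ∈ M →
      s(((a, ⟨0, by omega⟩) : Fin m × Fin t), (b, ⟨0, by omega⟩)) ∈ C.edges)
    {a b : Fin m} {j : Fin t} (hj : j.val = 0) (he : s((a, j), (b, j)) ∈ C.edges) :
    s(a, b) ∈ M := by
  rw [show j = ⟨0, by omega⟩ from Fin.ext hj] at he
  obtain ⟨c, hc⟩ := hM.exists_mem a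
  obtain rfl := eq_of_horizontal_mem_edges hC (i := ⟨1, by omega⟩) (by simp [Fin.ext_iff])
    (hV a _ _ rfl) (hMC a c hc) he
  exact hc

lemma mem_pair_of_top_mem_edges (ht : 2 ≤ t) {w₁ w₃ : Fin m}
    (hT : s(((w₁, ⟨t - 1, by omega⟩) : Fin m × Fin t), (w₃, ⟨t - 1, by omega⟩)) ∈ C.edges)
    {a b : Fin m} {j : Fin t} (hj : j.val = t - 1) (he : s((a, j), (b, j)) ∈ C.edges)
    (ha : a ∈ ({w₁, w₃} : Finset (Fin m))) : b ∈ ({w₁, w₃} : Finset (Fin m)) := by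
  rw [show j = ⟨t - 1, by omega⟩ from Fin.ext hj] at he
  have hv : s((a, ⟨t - 1, by omega⟩), (a, ⟨t - 2, by omega⟩)) ∈ C.edges := by
    rw [Sym2.eq_swap]
    exact hV a _ _ (by simp only; omega)
  have hij : (⟨t - 2, by omega⟩ : Fin t) ≠ ⟨t - 1, by omega⟩ := Fin.ne_of_val_ne (by dsimp only; omega)
  rw [mem_insert, mem_singleton] at ha ⊢
  rcases ha with rfl | rfl
  · exact .inr (eq_of_horizontal_mem_edges hC hij hv hT he)
  · exact .inl (eq_of_horizontal_mem_edges hC hij hv (by rwa [Sym2.eq_swap]) he)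

lemma not_crossing_pair_of_top_mem_edges (ht : 2 ≤ t) {w₁ w₃ : Fin m}
    (hT : s(((w₁, ⟨t - 1, by omega⟩) : Fin m × Fin t), (w₃, ⟨t - 1, by omega⟩)) ∈ C.edges)
    {a b : Fin m} {j : Fin t} (hj : j.val = t - 1) (he : s((a, j), (b, j)) ∈ C.edges) :
    ¬ crossing {w₁, w₃} s(a, b) := by
  have hab := mem_pair_of_top_mem_edges hC hV ht hT hj he
  have hba := mem_pair_of_top_mem_edges hC hV ht hT hj (by rwa [Sym2.eq_swap] at he)
  rw [crossing_mk_iff]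
  tauto

lemma filter_crossing_handle_eq (hM : IsPerfectMatchingKm m M) (ht : 2 ≤ t)
    (hMC : ∀ a b : Fin m, s(a, b) ∈ M →
      s(((a, ⟨0, by omega⟩) : Fin m × Fin t), (b, ⟨0, by omega⟩)) ∈ C.edges)
    (hh : 1 ≤ h) (hht : h < t) (hW : W ⊆ S)
    (hH : ∀ a j, (a, j) ∈ H ↔ a ∈ S ∧ (a ∈ W ∨ j.val < h))
    (hTop : ∀ (a b : Fin m) (j : Fin t), j.val = t - 1 → s((a, j), (b, j)) ∈ C.edges →
      ¬ crossing W s(a, b)) :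
    C.edges.toFinset.filter (crossing H) =
      (M.filter (crossing S)).image (Sym2.map (·, ⟨0, by omega⟩)) ∪
      (S \ W).image (fun a => s((a, ⟨h - 1, by omega⟩), (a, ⟨h, hht⟩))) := by
  ext e
  simp only [mem_filter, mem_union, mem_image, List.mem_toFinset]
  constructor
  · rintro ⟨he, hcr⟩
    rcases subPrism_edge_cases (C.edges_subset_edgeSet he) with
      ⟨a, b, j, -, hj | hj, rfl⟩ | ⟨a, j, k, hjk, rfl⟩
    · refine .inl ⟨s(a, b), ⟨mem_of_bottom_mem_edges hC hV hM ht hMC hj he,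
        (crossing_handle_bottom_iff hH hh hj _).mp hcr⟩, ?_⟩
      rw [show j = ⟨0, by omega⟩ from Fin.ext hj]
      rfl
    · exact absurd ((crossing_handle_top_iff hH hW hht hj a b).mp hcr) (hTop a b j hj he)
    · obtain ⟨ha, hk⟩ := (crossing_handle_vertical_iff hH hjk).mp hcr
      refine .inr ⟨a, ha, ?_⟩
      simp only [Sym2.eq_iff, Prod.ext_iff, Fin.ext_iff, true_and]
      omega
  · rintro (⟨e, ⟨heM, hcr⟩, rfl⟩ | ⟨a, ha, rfl⟩)
    · refine ⟨?_, (crossing_handle_bottom_iff hH hh rfl _).mpr hcr⟩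
      induction e using Sym2.ind with
      | _ a b => exact hMC a b heM
    · exact ⟨hV a _ _ (by simp only; omega),
        (crossing_handle_vertical_iff hH (by simp only; omega)).mpr ⟨ha, rfl⟩⟩

lemma card_filter_crossing_handle (hM : IsPerfectMatchingKm m M) (ht : 2 ≤ t)
    (hMC : ∀ a b : Fin m, s(a, b) ∈ M →
      s(((a, ⟨0, by omega⟩) : Fin m × Fin t), (b, ⟨0, by omega⟩)) ∈ C.edges)
    (hh : 1 ≤ h) (hht : h < t) (hW : W ⊆ S)
    (hH : ∀ a j, (a, j) ∈ H ↔ a ∈ S ∧ (a ∈ W ∨ j.val < h))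
    (hTop : ∀ (a b : Fin m) (j : Fin t), j.val = t - 1 → s((a, j), (b, j)) ∈ C.edges →
      ¬ crossing W s(a, b)) :
    (C.edges.toFinset.filter (crossing H)).card = (M.filter (crossing S)).card + (S \ W).card := by
  rw [filter_crossing_handle_eq hC hV hM ht hMC hh hht hW hH hTop, card_union_of_disjoint,
    card_image_of_injective _ (Sym2.map.injective fun a b hab => congrArg Prod.fst hab),
    card_image_of_injective]
  · intro a b hab
    simp only [Sym2.eq_iff, Prod.mk.injEq] at hab
    tauto
  · simp only [Finset.disjoint_left, mem_image]
    rintro _ ⟨e, -, rfl⟩ ⟨a, -, hea⟩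
    induction e using Sym2.ind with
    | _ b c =>
      simp only [Sym2.map_mk, Sym2.eq_iff, Prod.ext_iff, Fin.ext_iff] at hea
      omega

end Tour

theorem handle_and_teeth_crossing_counts (h t m : ℕ)
    (hh : 1 ≤ h) (hht : h < t) (ht : 2 ≤ t)
    (M : Finset (Sym2 (Fin m))) (hM : IsPerfectMatchingKm m M)
    (S : Finset (Fin m))
    (w₁ w₂ w₃ w₄ : Fin m)
    (hw : w₁ ∈ S ∧ w₂ ∈ S ∧ w₃ ∈ S ∧ w₄ ∈ S)
    (hdist : w₁ ≠ w₂ ∧ w₁ ≠ w₃ ∧ w₁ ≠ w₄ ∧ w₂ ≠ w₃ ∧ w₂ ≠ w₄ ∧ w₃ ≠ w₄)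
    -- The handle: the bottom copy of `S`, the full columns of `w₁` and `w₃`,
    -- and layers `1, …, h-1` of the columns of the other vertices of `S`.
    (H : Finset (Fin m × Fin t))
    (hH : H = Finset.univ.filter (fun p : Fin m × Fin t =>
      (p.1 ∈ S ∧ p.2.val = 0) ∨
      ((p.1 = w₁ ∨ p.1 = w₃) ∧ 1 ≤ p.2.val) ∨
      (p.1 ∈ S ∧ p.1 ≠ w₁ ∧ p.1 ≠ w₃ ∧ 1 ≤ p.2.val ∧ p.2.val < h)))
    -- The tooth of `w`: the full column of `w`.
    (Tooth : Fin m → Finset (Fin m × Fin t))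
    (hTooth : ∀ w : Fin m, Tooth w = Finset.univ.filter (fun p => p.1 = w)) :
    ∀ (v : Fin m × Fin t) (C : (subPrism m t).Walk v v),
      C.IsHamiltonianCycle →
      (∀ a b : Fin m, s(a, b) ∈ M →
        s(((a, ⟨0, by omega⟩) : Fin m × Fin t), (b, ⟨0, by omega⟩)) ∈ C.edges) →
      (∀ (i : Fin m) (j : ℕ) (hj : j + 1 < t),
        s(((i, ⟨j, by omega⟩) : Fin m × Fin t), (i, ⟨j + 1, hj⟩)) ∈ C.edges) →
      s(((w₁, ⟨t - 1, by omega⟩) : Fin m × Fin t), (w₃, ⟨t - 1, by omega⟩)) ∈ C.edges →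
      (C.edges.toFinset.filter (crossing H)).card =
          (M.filter (crossing S)).card + (S.card - 2) ∧
        ∀ w ∈ S \ {w₁, w₃},
          (C.edges.toFinset.filter (crossing (Tooth w))).card = 2 := by
  obtain ⟨hw₁, -, hw₃, -⟩ := hw
  intro v C hC hMC hVert hT
  have hV : ∀ (a : Fin m) (j k : Fin t), j.val + 1 = k.val → s((a, j), (a, k)) ∈ C.edges := by
    rintro a ⟨j, -⟩ ⟨_, hk⟩ rfl
    exact hVert a j hk
  have hW : ({w₁, w₃} : Finset (Fin m)) ⊆ S := by simp [insert_subset_iff, hw₁, hw₃]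
  refine ⟨?_, fun w _ => hTooth w ▸ card_filter_crossing_column hC.isCycle ht hV w⟩
  rw [card_filter_crossing_handle hC.isCycle hV hM ht hMC hh hht hW
      (hH ▸ mem_handle_iff hh hw₁ hw₃)
      (fun a b j hj he => not_crossing_pair_of_top_mem_edges hC.isCycle hV ht hT hj he),
    card_sdiff_of_subset hW, card_pair hdist.2.1]
end

section
/- Let G be a graph and let G' be the 3-subdivided prism of G. If F is a 2-matching of G', i.e. a spanning subgraph of G' in which every vertex has degree exactly 2, then F contains every vertical edge of G', and the set of bottom edges of F, i.e. { {u,v} : (u^1, v^1) ∈ E(F) }, is a perfect matching of G. -/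
open SimpleGraph Finset

attribute [local instance] Classical.propDecidable

/-- The `3`-subdivided prism of a graph `G`: vertex `(u, j)` is the copy of
`u` in layer `j` (`j = 0` bottom, `j = 2` top). There are copies of `G` on the
bottom and top layers, and vertical paths `(u,0) - (u,1) - (u,2)` for each
vertex `u`. -/
def prism3 {V : Type*} (G : SimpleGraph V) : SimpleGraph (V × Fin 3) :=
  SimpleGraph.fromRel (fun p q =>
    (p.2 = 0 ∧ q.2 = 0 ∧ G.Adj p.1 q.1) ∨
    (p.2 = 2 ∧ q.2 = 2 ∧ G.Adj p.1 q.1) ∨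
    (p.1 = q.1 ∧ p.2.val + 1 = q.2.val))

/-- A 2-matching of a graph `G`, given as a set of edges of `G`: every vertex
is incident to exactly two edges of the set. -/
def IsTwoMatchingOf {W : Type*} [Fintype W] (G : SimpleGraph W)
    (F : Finset (Sym2 W)) : Prop :=
  (∀ e ∈ F, e ∈ G.edgeSet) ∧ ∀ v : W, (F.filter (fun e => v ∈ e)).card = 2

/-- A perfect matching of a graph `G`, given as a set of edges of `G` such
that every vertex belongs to exactly one of them. -/
def IsPerfectMatchingOf {W : Type*} (G : SimpleGraph W)
    (M : Finset (Sym2 W)) : Prop :=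
  (∀ e ∈ M, e ∈ G.edgeSet) ∧ ∀ v : W, ∃! e, e ∈ M ∧ v ∈ e

lemma edge_other {W : Type*} {H : SimpleGraph W} {e : Sym2 W} (he : e ∈ H.edgeSet)
    {p : W} (hp : p ∈ e) : ∃ q, H.Adj p q ∧ e = s(p, q) := by
  refine ⟨Sym2.Mem.other hp, ?_, (Sym2.other_spec hp).symm⟩
  rw [← Sym2.other_spec hp] at he
  exact he

lemma adj1 {V : Type*} {G : SimpleGraph V} {u : V} {q : V × Fin 3}
    (h : (prism3 G).Adj (u, 1) q) : q = (u, 0) ∨ q = (u, 2) := by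
  obtain ⟨x, j⟩ := q
  rw [prism3, fromRel_adj] at h
  fin_cases j <;> simp_all

lemma adj0 {V : Type*} {G : SimpleGraph V} {u : V} {q : V × Fin 3}
    (h : (prism3 G).Adj (u, 0) q) : q = (u, 1) ∨ (∃ v, q = (v, 0) ∧ G.Adj u v) := by
  obtain ⟨x, j⟩ := q
  rw [prism3, fromRel_adj] at h
  fin_cases j <;> simp_all
  · rcases h.2 with h | h
    · exact h
    · exact h.symm

theorem two_matching_of_prism3 {V : Type*} [Fintype V] [DecidableEq V]
    (G : SimpleGraph V) (F : Finset (Sym2 (V × Fin 3)))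
    (hF : IsTwoMatchingOf (prism3 G) F) :
    (∀ u : V, s((u, (0 : Fin 3)), (u, (1 : Fin 3))) ∈ F ∧
        s((u, (1 : Fin 3)), (u, (2 : Fin 3))) ∈ F) ∧
      IsPerfectMatchingOf G
        (Finset.univ.filter (fun e : Sym2 V => ∃ u v : V, e = s(u, v) ∧
          s((u, (0 : Fin 3)), (v, (0 : Fin 3))) ∈ F)) := by
  obtain ⟨hFE, hdeg⟩ := hF
  have hdeg' : ∀ v : V × Fin 3, (F.filter (fun e => v ∈ e)).card = 2 := by
    intro v
    convert hdeg v using 3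
  clear hdeg
  rename' hdeg' => hdeg
  -- Step 1: vertical edges
  have hvert : ∀ u : V, s((u, (0 : Fin 3)), (u, (1 : Fin 3))) ∈ F ∧
      s((u, (1 : Fin 3)), (u, (2 : Fin 3))) ∈ F := by
    intro u
    set e₁ : Sym2 (V × Fin 3) := s((u, (0 : Fin 3)), (u, (1 : Fin 3))) with he₁
    set e₂ : Sym2 (V × Fin 3) := s((u, (1 : Fin 3)), (u, (2 : Fin 3))) with he₂
    have hne : e₁ ≠ e₂ := by
      simp [he₁, he₂, Sym2.eq_iff, Prod.ext_iff]
    have hsub : F.filter (fun e => (u, (1 : Fin 3)) ∈ e) ⊆ {e₁, e₂} := by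
      intro e he
      rw [Finset.mem_filter] at he
      obtain ⟨q, hq, heq⟩ := edge_other (hFE e he.1) he.2
      rcases adj1 hq with rfl | rfl
      · simp [heq, he₁, Sym2.eq_swap]
      · simp [heq, he₂]
    have hcard : ({e₁, e₂} : Finset (Sym2 (V × Fin 3))).card = 2 := by
      rw [Finset.card_insert_of_notMem (by simpa using hne), Finset.card_singleton]
    have heq : F.filter (fun e => (u, (1 : Fin 3)) ∈ e) = {e₁, e₂} :=
      Finset.eq_of_subset_of_card_le hsub
        (by rw [hcard]; exact le_of_eq (hdeg _).symm)
    constructor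
    · have h1 : e₁ ∈ F.filter (fun e => (u, (1 : Fin 3)) ∈ e) := by rw [heq]; simp
      exact (Finset.mem_filter.mp h1).1
    · have h2 : e₂ ∈ F.filter (fun e => (u, (1 : Fin 3)) ∈ e) := by rw [heq]; simp
      exact (Finset.mem_filter.mp h2).1
  refine ⟨hvert, ?_, ?_⟩
  -- edges of the matching are edges of G
  · intro e he
    rw [Finset.mem_filter] at he
    obtain ⟨-, u, v, rfl, hb⟩ := he
    have hadj := hFE _ hb
    rw [mem_edgeSet] at hadj
    rcases adj0 hadj with h | ⟨v', h, hgv⟩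
    · exact absurd h (by simp [Prod.ext_iff])
    · rw [mem_edgeSet]
      have hv : v = v' := (Prod.ext_iff.mp h).1
      rwa [hv]
  -- each vertex of G is in exactly one matching edge
  · intro w
    set vert : Sym2 (V × Fin 3) := s((w, (0 : Fin 3)), (w, (1 : Fin 3))) with hv
    have hvF : vert ∈ F.filter (fun e => (w, (0 : Fin 3)) ∈ e) :=
      Finset.mem_filter.mpr ⟨(hvert w).1, by simp [hv]⟩
    have hcard : ((F.filter (fun e => (w, (0 : Fin 3)) ∈ e)).erase vert).card = 1 := by
      rw [Finset.card_erase_of_mem hvF]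
      have h2 := hdeg (w, (0 : Fin 3))
      omega
    obtain ⟨e', he'⟩ := Finset.card_eq_one.mp hcard
    have he'mem : e' ∈ (F.filter (fun e => (w, (0 : Fin 3)) ∈ e)).erase vert := by
      rw [he']; simp
    have he'ne : e' ≠ vert := (Finset.mem_erase.mp he'mem).1
    have he'F : e' ∈ F := (Finset.mem_filter.mp (Finset.mem_erase.mp he'mem).2).1
    have he'w : (w, (0 : Fin 3)) ∈ e' := (Finset.mem_filter.mp (Finset.mem_erase.mp he'mem).2).2
    obtain ⟨q, hq, heq⟩ := edge_other (hFE e' he'F) he'w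
    rcases adj0 hq with rfl | ⟨x, rfl, hgx⟩
    · exact absurd (heq.trans hv.symm) he'ne
    have key : ∀ b : V, s((w, (0 : Fin 3)), (b, (0 : Fin 3))) ∈ F → b = x := by
      intro b hab
      have hbe : s((w, (0 : Fin 3)), (b, (0 : Fin 3))) ≠ vert := by
        intro h
        rw [hv, Sym2.eq_iff] at h
        rcases h with ⟨-, h⟩ | ⟨h, -⟩ <;> exact absurd h (by simp [Prod.ext_iff])
      have hmem : s((w, (0 : Fin 3)), (b, (0 : Fin 3))) ∈
          (F.filter (fun e => (w, (0 : Fin 3)) ∈ e)).erase vert :=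
        Finset.mem_erase.mpr ⟨hbe, Finset.mem_filter.mpr ⟨hab, by simp⟩⟩
      rw [he', Finset.mem_singleton, heq, Sym2.eq_iff] at hmem
      rcases hmem with ⟨-, h⟩ | ⟨h1, h2⟩
      · exact (Prod.ext_iff.mp h).1
      · exact ((Prod.ext_iff.mp h2).1).trans (Prod.ext_iff.mp h1).1
    refine ⟨s(w, x), ⟨Finset.mem_filter.mpr ⟨Finset.mem_univ _, w, x, rfl, heq ▸ he'F⟩,
      by simp⟩, ?_⟩
    rintro f ⟨hfM, hwf⟩
    rw [Finset.mem_filter] at hfM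
    obtain ⟨-, a, b, rfl, hab⟩ := hfM
    rw [Sym2.mem_iff] at hwf
    rcases hwf with rfl | rfl
    · rw [key b hab]
    · have hab' : s((w, (0 : Fin 3)), (a, (0 : Fin 3))) ∈ F := by rwa [Sym2.eq_swap]
      rw [key a hab', Sym2.eq_swap]
end

section
/- Let n ≥ 3, let (H; T_1, …, T_k) be a comb in K_n such that additionally T_i \ H ≠ ∅ for every i, and let T be a Hamiltonian cycle of K_n. Then |δ(H) ∩ E(T)| + Σ_{i=1}^{k} |δ(T_i) ∩ E(T)| ≥ 3k + 1; that is, the comb inequality x(δ(H)) + Σ_{i=1}^{k} x(δ(T_i)) ≥ 3k+1 is valid for the characteristic vector of every Hamiltonian cycle of K_n. -/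
/-!
Along a closed trail every vertex set `S` is entered as often as it is left, so `x(δ(S))` is even,
and it is at least `2` as soon as the trail visits both `S` and its complement.
For a tooth `T`, the cuts of `T ∩ H` and `T \ H` together count `δ(T)` once and the edges of
`δ(H)` inside `T` twice; as the teeth are disjoint, the latter number at most `x(δ(H))` in total.
Hence `4k ≤ Σ x(δ(Tᵢ)) + 2 x(δ(H))`, which with `Σ x(δ(Tᵢ)) ≥ 2k` bounds the left-hand side
below by `3k`, and parity (`k` is odd) improves this to `3k + 1`.
-/

open SimpleGraph Finset

attribute [local instance] Classical.propDecidable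

section Cut

variable {V : Type*}

@[simp]
lemma crossing_mk (S : Finset V) (u w : V) : crossing S s(u, w) ↔ ¬(u ∈ S ↔ w ∈ S) := by
  simp only [crossing, Sym2.mem_iff, exists_eq_or_imp, exists_eq_left]
  tauto

/-- `x(δ(S))`, where `x` is the characteristic vector of `E`. -/
noncomputable def cutCard (E : Finset (Sym2 V)) (S : Finset V) : ℕ :=
  #(E.filter (crossing S))

noncomputable def cutCardWithin (E : Finset (Sym2 V)) (H T : Finset V) : ℕ :=
  #(E.filter fun e => crossing H e ∧ ∀ a ∈ e, a ∈ T)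

variable (E : Finset (Sym2 V))

lemma cutCard_inter_add_cutCard_sdiff [DecidableEq V] (T H : Finset V) :
    cutCard E (T ∩ H) + cutCard E (T \ H) =
      cutCard E T + 2 * cutCardWithin E H T := by
  simp only [cutCard, cutCardWithin, card_filter, ← sum_add_distrib, mul_sum]
  refine sum_congr rfl fun e _ => ?_
  induction e using Sym2.ind with
  | _ u w =>
    by_cases hu : u ∈ T <;> by_cases hw : w ∈ T <;> by_cases hu' : u ∈ H <;>
      by_cases hw' : w ∈ H <;> simp [hu, hw, hu', hw']

open Function in
lemma sum_cutCardWithin_le_cutCard {ι : Type*} [Fintype ι] (H : Finset V)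
    {T : ι → Finset V} (hT : Pairwise (Disjoint on T)) :
    ∑ i, cutCardWithin E H (T i) ≤ cutCard E H := by
  simp only [cutCardWithin]
  rw [← card_biUnion]
  · refine card_le_card fun e he => ?_
    obtain ⟨i, -, he⟩ := mem_biUnion.mp he
    exact mem_filter.mpr ⟨(mem_filter.mp he).1, (mem_filter.mp he).2.1⟩
  · intro i _ j _ hij
    refine disjoint_left.mpr fun e hei hej => ?_
    have hmem := Sym2.out_fst_mem e
    exact disjoint_left.mp (hT hij) ((mem_filter.mp hei).2.2 _ hmem)
      ((mem_filter.mp hej).2.2 _ hmem)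

end Cut

namespace SimpleGraph.Walk

variable {V : Type*} {G : SimpleGraph V} (S : Finset V)

theorem even_countP_crossing_iff {a b : V} (p : G.Walk a b) :
    Even (p.edges.countP (crossing S ·)) ↔ (a ∈ S ↔ b ∈ S) := by
  induction p with
  | nil => simp
  | @cons a c b h q ih =>
    rw [edges_cons, List.countP_cons]
    by_cases ha : a ∈ S <;> by_cases hc : c ∈ S <;> simp_all [Nat.even_add_one]

theorem mem_iff_of_forall_not_crossing {a b : V} (p : G.Walk a b)
    (h : ∀ e ∈ p.edges, ¬crossing S e) {x : V} (hx : x ∈ p.support) : x ∈ S ↔ a ∈ S := by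
  induction p with
  | nil => simp_all
  | @cons a c b hadj q ih =>
    have hac : a ∈ S ↔ c ∈ S := by simpa using h s(a, c) (by simp)
    rcases List.mem_cons.mp (support_cons hadj q ▸ hx) with rfl | hx
    · rfl
    · exact (ih (fun e he => h e (List.mem_cons_of_mem _ he)) hx).trans hac.symm

theorem IsTrail.even_cutCard [DecidableEq V] {u : V} {p : G.Walk u u} (hp : p.IsTrail) :
    Even (cutCard p.edges.toFinset S) := by
  rw [cutCard, hp.edges_nodup.card_eq_countP]
  exact (p.even_countP_crossing_iff S).mpr Iff.rfl

theorem IsTrail.two_le_cutCard [DecidableEq V] {u x y : V} {p : G.Walk u u} (hp : p.IsTrail)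
    (hx : x ∈ p.support) (hy : y ∈ p.support) (hxS : x ∈ S) (hyS : y ∉ S) :
    2 ≤ cutCard p.edges.toFinset S := by
  have hne : cutCard p.edges.toFinset S ≠ 0 := by
    rw [cutCard, Finset.card_ne_zero]
    by_contra hempty
    have h : ∀ e ∈ p.edges, ¬crossing S e := fun e he hcross =>
      hempty ⟨e, mem_filter.mpr ⟨List.mem_toFinset.mpr he, hcross⟩⟩
    exact hyS ((p.mem_iff_of_forall_not_crossing S h hy).trans
      (p.mem_iff_of_forall_not_crossing S h hx).symm |>.mpr hxS)
  have := Nat.even_iff.mp (hp.even_cutCard S)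
  omega

end SimpleGraph.Walk

theorem comb_bound_of_even_cuts {V : Type*} [Fintype V] [DecidableEq V] {E : Finset (Sym2 V)}
    (heven : ∀ S, Even (cutCard E S))
    (hsep : ∀ S : Finset V, ∀ x ∈ S, ∀ y ∉ S, 2 ≤ cutCard E S)
    {H : Finset V} {k : ℕ} {T : Fin k → Finset V}
    (hcomb : IsComb H T) (hTH : ∀ i, (T i \ H).Nonempty) :
    3 * k + 1 ≤ cutCard E H + ∑ i, cutCard E (T i) := by
  obtain ⟨-, hkodd, hdisj, hHT, ⟨z, hz⟩⟩ := hcomb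
  have htooth : ∀ i, 4 ≤ cutCard E (T i) + 2 * cutCardWithin E H (T i) := fun i => by
    obtain ⟨x, hx⟩ := hHT i
    obtain ⟨y, hy⟩ := hTH i
    obtain ⟨hxH, hxT⟩ := mem_inter.mp hx
    obtain ⟨hyT, hyH⟩ := mem_sdiff.mp hy
    have h₁ := hsep (T i ∩ H) x (mem_inter.mpr ⟨hxT, hxH⟩) y fun h => hyH (mem_inter.mp h).2
    have h₂ := hsep (T i \ H) y (mem_sdiff.mpr ⟨hyT, hyH⟩) x fun h => (mem_sdiff.mp h).2 hxH
    have := cutCard_inter_add_cutCard_sdiff E (T i) H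
    omega
  have hteeth : ∀ i, 2 ≤ cutCard E (T i) := fun i => by
    obtain ⟨x, hx⟩ := hHT i
    obtain ⟨hxH, hxT⟩ := mem_inter.mp hx
    exact hsep (T i) x hxT z fun h => (mem_sdiff.mp hz).2 (mem_biUnion.mpr ⟨i, mem_univ i, h⟩)
  have hwithin : ∑ i, cutCardWithin E H (T i) ≤ cutCard E H :=
    sum_cutCardWithin_le_cutCard E H hdisj
  have hsum₁ : 4 * k ≤ ∑ i, cutCard E (T i) + 2 * ∑ i, cutCardWithin E H (T i) := by
    simpa [sum_add_distrib, mul_sum, mul_comm] using sum_le_sum fun i (_ : i ∈ univ) => htooth i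
  have hsum₂ : 2 * k ≤ ∑ i, cutCard E (T i) := by
    simpa [mul_comm] using sum_le_sum fun i (_ : i ∈ univ) => hteeth i
  have hparity : Even (cutCard E H + ∑ i, cutCard E (T i)) :=
    (heven H).add (even_sum _ fun i _ => heven (T i))
  rw [Nat.even_iff] at hparity
  have := Nat.odd_iff.mp hkodd
  omega

theorem comb_inequality_valid_general (n : ℕ)
    (H : Finset (Fin n)) (k : ℕ) (T : Fin k → Finset (Fin n))
    (hcomb : IsComb H T) (hTH : ∀ i, (T i \ H).Nonempty)
    (v : Fin n) (C : (⊤ : SimpleGraph (Fin n)).Walk v v)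
    (hC : C.IsHamiltonianCycle) :
    3 * k + 1 ≤ (C.edges.toFinset.filter (crossing H)).card +
      ∑ i, (C.edges.toFinset.filter (crossing (T i))).card := by
  have htrail := hC.isCycle.isTrail
  exact comb_bound_of_even_cuts htrail.even_cutCard
    (fun S x hx y hy => htrail.two_le_cutCard S (hC.mem_support x) (hC.mem_support y) hx hy)
    hcomb hTH

theorem comb_inequality_valid (n : ℕ) (hn : 3 ≤ n)
    (H : Finset (Fin n)) (k : ℕ) (T : Fin k → Finset (Fin n))
    (hcomb : IsComb H T) (hTH : ∀ i, (T i \ H).Nonempty)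
    (v : Fin n) (C : (⊤ : SimpleGraph (Fin n)).Walk v v)
    (hC : C.IsHamiltonianCycle) :
    3 * k + 1 ≤ (C.edges.toFinset.filter (crossing H)).card +
      ∑ i, (C.edges.toFinset.filter (crossing (T i))).card :=
  comb_inequality_valid_general n H k T hcomb hTH v C hC
end
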